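/- arXiv:cs/0602048 — 8 statements merged into one kernel-verified Lean document; each statement's English description precedes it below -/
import Mathlib

section
/- Let 0 < r < 1 and 0 ≤ f ≤ 1. Then the infimum of v₁ + v₂ + v_r over all (v₁, v₂, v_r) ∈ ℝ³ with v₁, v₂, v_r ≥ 0 satisfying f·(1−v₁)⁺ + (1−f)·(1−min{v₁, v_r})⁺ ≤ r/2 equals: 2−r if 0 ≤ f < 1/2; 2 − r/(2(1−f)) if 1/2 ≤ f < 1−r/2; and (2−r)/(2f) if 1−r/2 ≤ f ≤ 1. (This is the computation of λ_{1}(f) in equation (26) of the paper, arising from the single-user outage event O_{1}⁺ of the DDF protocol in the multiple access relay channel.) -/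
/-!
Write `a = v₁` and `b = min v₁ v_r`, so that `0 ≤ b ≤ a`, the constraint only involves `(a, b)`
and the objective is at least `a + b`, with equality for `v₂ = 0`, `v_r = b`. Minimising `a + b`
subject to `f (1 - a)⁺ + (1 - f) (1 - b)⁺ ≤ r / 2` is a linear programme in disguise: in each
regime of `f` the constraint function dominates one linear function of `(a, b)`, which gives the
lower bound, and a vertex of the feasible region attains it: `a = b = 1 - r/2` for `f < 1/2`,
`a = 1` for `1/2 ≤ f < 1 - r/2`, and `b = 0` for `f ≥ 1 - r/2`.
-/

noncomputable section

/-- The rate exponent of the first source when the relay listens during the fraction `f` of the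
codeword: `a` plays the role of `v₁` and `b` that of `min v₁ v_r`. -/
def ddfRate (f a b : ℝ) : ℝ := f * max (1 - a) 0 + (1 - f) * max (1 - b) 0

def ddfSumSet (f r : ℝ) : Set ℝ :=
  {s | ∃ v₁ v₂ vr : ℝ, 0 ≤ v₁ ∧ 0 ≤ v₂ ∧ 0 ≤ vr ∧ ddfRate f v₁ (min v₁ vr) ≤ r / 2 ∧
    s = v₁ + v₂ + vr}

theorem isLeast_ddfSumSet {f r a b c : ℝ} (hb : 0 ≤ b) (hba : b ≤ a)
    (hrate : ddfRate f a b ≤ r / 2) (hc : a + b = c)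
    (hlow : ∀ a' b', 0 ≤ b' → b' ≤ a' → ddfRate f a' b' ≤ r / 2 → c ≤ a' + b') :
    IsLeast (ddfSumSet f r) c := by
  refine ⟨⟨a, 0, b, hb.trans hba, le_rfl, hb, by rwa [min_eq_right hba], by linarith⟩, ?_⟩
  rintro s ⟨v₁, v₂, vr, hv₁, hv₂, hvr, hrate', rfl⟩
  have := hlow v₁ (min v₁ vr) (le_min hv₁ hvr) (min_le_left _ _) hrate'
  linarith [min_le_right v₁ vr]

section LowerBounds

variable {f a b : ℝ}

theorem two_sub_add_le_two_mul_ddfRate (hf : f ≤ 1 / 2) (hba : b ≤ a) :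
    2 - (a + b) ≤ 2 * ddfRate f a b := by
  have hmono : max (1 - a) 0 ≤ max (1 - b) 0 := max_le_max_right _ (by linarith)
  have hweight : 0 ≤ (1 - 2 * f) * (max (1 - b) 0 - max (1 - a) 0) :=
    mul_nonneg (by linarith) (by linarith)
  unfold ddfRate
  linarith [le_max_left (1 - a) 0, le_max_left (1 - b) 0]

theorem one_sub_mul_two_sub_add_le_ddfRate (hf : 1 / 2 ≤ f) (hf1 : f ≤ 1) :
    (1 - f) * (2 - (a + b)) ≤ ddfRate f a b := by
  have hweight : 0 ≤ (2 * f - 1) * max (1 - a) 0 := mul_nonneg (by linarith) (le_max_right _ _)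
  have hsum : (1 - f) * (2 - (a + b)) ≤ (1 - f) * (max (1 - a) 0 + max (1 - b) 0) :=
    mul_le_mul_of_nonneg_left (by linarith [le_max_left (1 - a) 0, le_max_left (1 - b) 0])
      (by linarith)
  unfold ddfRate
  linarith

theorem one_sub_mul_add_le_ddfRate (hf : 1 / 2 ≤ f) (hf1 : f ≤ 1) (hb : 0 ≤ b) :
    1 - f * (a + b) ≤ ddfRate f a b := by
  have ha : f * (1 - a) ≤ f * max (1 - a) 0 :=
    mul_le_mul_of_nonneg_left (le_max_left _ _) (by linarith)
  have hb' : (1 - f) * (1 - b) ≤ (1 - f) * max (1 - b) 0 :=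
    mul_le_mul_of_nonneg_left (le_max_left _ _) (by linarith)
  have hweight : 0 ≤ (2 * f - 1) * b := mul_nonneg (by linarith) hb
  unfold ddfRate
  linarith

end LowerBounds

section Regimes

variable {f r : ℝ}

theorem isLeast_ddfSumSet_of_le_half (hr : 0 ≤ r) (hr2 : r ≤ 2) (hf : f ≤ 1 / 2) :
    IsLeast (ddfSumSet f r) (2 - r) := by
  refine isLeast_ddfSumSet (a := 1 - r / 2) (b := 1 - r / 2) ?_ le_rfl ?_ (by ring) ?_
  · linarith
  · have : max (1 - (1 - r / 2)) 0 = r / 2 := by rw [sub_sub_cancel, max_eq_left (by linarith)]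
    simp only [ddfRate, this]
    linarith
  · intro a b _ hba hrate
    linarith [two_sub_add_le_two_mul_ddfRate hf hba]

theorem isLeast_ddfSumSet_of_half_le_of_lt_one_sub (hr : 0 ≤ r) (hf : 1 / 2 ≤ f)
    (hfr : f < 1 - r / 2) :
    IsLeast (ddfSumSet f r) (2 - r / (2 * (1 - f))) := by
  have hpos : 0 < 2 * (1 - f) := by linarith
  have ht : r / (2 * (1 - f)) ≤ 1 := (div_le_one hpos).2 (by linarith)
  have ht0 : 0 ≤ r / (2 * (1 - f)) := div_nonneg hr hpos.le
  refine isLeast_ddfSumSet (a := 1) (b := 1 - r / (2 * (1 - f))) ?_ ?_ ?_ (by ring) ?_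
  · linarith
  · linarith
  · have : max (1 - (1 - r / (2 * (1 - f)))) 0 = r / (2 * (1 - f)) := by
      rw [sub_sub_cancel, max_eq_left ht0]
    have hne : 1 - f ≠ 0 := by linarith
    simp only [ddfRate, this, sub_self, max_self, mul_zero, zero_add]
    field_simp
    exact le_rfl
  · intro a b _ _ hrate
    have hlin := (one_sub_mul_two_sub_add_le_ddfRate hf (by linarith) (a := a) (b := b)).trans hrate
    have : 2 - (a + b) ≤ r / (2 * (1 - f)) := by
      rw [le_div_iff₀ hpos]
      linarith
    linarith

theorem isLeast_ddfSumSet_of_one_sub_le (hr2 : r ≤ 2) (hf : 1 / 2 ≤ f) (hrf : 1 - r / 2 ≤ f)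
    (hf1 : f ≤ 1) : IsLeast (ddfSumSet f r) ((2 - r) / (2 * f)) := by
  have hpos : 0 < 2 * f := by linarith
  have hL : (2 - r) / (2 * f) ≤ 1 := (div_le_one hpos).2 (by linarith)
  refine isLeast_ddfSumSet (b := 0) le_rfl (div_nonneg (by linarith) hpos.le) ?_ (add_zero _) ?_
  · have : max (1 - (2 - r) / (2 * f)) 0 = 1 - (2 - r) / (2 * f) := max_eq_left (by linarith)
    simp only [ddfRate, this, sub_zero, max_eq_left zero_le_one]
    field_simp
    linarith
  · intro a b hb _ hrate
    have hlin := (one_sub_mul_add_le_ddfRate hf hf1 hb).trans hrate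
    rw [div_le_iff₀ hpos]
    linarith

end Regimes

end

theorem lambda_one_inf_general (r f : ℝ) (hr0 : 0 < r) (hr1 : r < 1) (hf1 : f ≤ 1) :
    sInf {s : ℝ | ∃ v₁ v₂ vr : ℝ, 0 ≤ v₁ ∧ 0 ≤ v₂ ∧ 0 ≤ vr ∧
        f * max (1 - v₁) 0 + (1 - f) * max (1 - min v₁ vr) 0 ≤ r / 2 ∧
        s = v₁ + v₂ + vr} =
      (if f < 1 / 2 then 2 - r
       else if f < 1 - r / 2 then 2 - r / (2 * (1 - f))
       else (2 - r) / (2 * f)) := by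
  change sInf (ddfSumSet f r) = _
  split_ifs with hf hf'
  · exact (isLeast_ddfSumSet_of_le_half hr0.le (by linarith) hf.le).csInf_eq
  · exact (isLeast_ddfSumSet_of_half_le_of_lt_one_sub hr0.le (not_lt.1 hf) hf').csInf_eq
  · exact (isLeast_ddfSumSet_of_one_sub_le (by linarith) (not_lt.1 hf) (not_lt.1 hf') hf1).csInf_eq

/-- Computation of λ_{1}(f) (equation (26)): the infimum of v₁+v₂+v_r over the
single-user outage region O_{1}⁺ of the DDF protocol in the MAR channel. -/
theorem lambda_one_inf (r f : ℝ) (hr0 : 0 < r) (hr1 : r < 1)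
    (hf0 : 0 ≤ f) (hf1 : f ≤ 1) :
    sInf {s : ℝ | ∃ v₁ v₂ vr : ℝ, 0 ≤ v₁ ∧ 0 ≤ v₂ ∧ 0 ≤ vr ∧
        f * max (1 - v₁) 0 + (1 - f) * max (1 - min v₁ vr) 0 ≤ r / 2 ∧
        s = v₁ + v₂ + vr} =
      (if f < 1 / 2 then 2 - r
       else if f < 1 - r / 2 then 2 - r / (2 * (1 - f))
       else (2 - r) / (2 * f)) :=
  lambda_one_inf_general r f hr0 hr1 hf1
end

section
/- Let 0 < r ≤ 1 and 0 ≤ f ≤ 1, and consider the infimum of v₁ + v₂ + v_r over all (v₁, v₂, v_r) ∈ ℝ³ with v₁, v₂, v_r ≥ 0 satisfying f·(1−min{v₁, v₂})⁺ + (1−f)·(1−min{v₁, v₂, v_r})⁺ ≤ r. If 0 < r < 1/3, this infimum equals 3(1−r) if 0 ≤ f < 2/3, equals 3 − r/(1−f) if 2/3 ≤ f < 1−r, and equals 2(1−r)/f if 1−r ≤ f ≤ 1. If 1/3 ≤ r ≤ 1, it equals 3(1−r) if 0 ≤ f < 2/3 and equals 2(1−r)/f if 2/3 ≤ f ≤ 1.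 (This is the computation of λ_{1,2}(f) in equations (133) and (27) of the paper, arising from the joint outage event O_{1,2}⁺ of the DDF protocol in the multiple access relay channel.) -/
/-!
With `a = min v₁ v₂ 1` and `b = min v₁ v₂ v_r 1`, the outage condition is the linear constraint
`1 - r ≤ f a + (1 - f) b` on `0 ≤ b ≤ a ≤ 1`, the sum `v₁ + v₂ + v_r` is at least `2a + b`, and
`(v₁, v₂, v_r) = (a, a, b)` attains `2a + b`. So the infimum is the value of the linear program
minimising `2a + b`, attained at one of the vertices `a = b = 1 - r`, `(a, b) = (1, 1 - r/(1-f))`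
or `(a, b) = ((1 - r)/f, 0)`.
-/

def jointOutageSums (r f : ℝ) : Set ℝ :=
  {s : ℝ | ∃ v₁ v₂ vr : ℝ, 0 ≤ v₁ ∧ 0 ≤ v₂ ∧ 0 ≤ vr ∧
    f * max (1 - min v₁ v₂) 0 + (1 - f) * max (1 - min v₁ (min v₂ vr)) 0 ≤ r ∧
    s = v₁ + v₂ + vr}

lemma max_one_sub_zero_eq (x : ℝ) : max (1 - x) 0 = 1 - min x 1 := by
  rcases le_total x 1 with h | h
  · rw [min_eq_left h, max_eq_left (by linarith)]
  · rw [min_eq_right h, max_eq_right (by linarith)]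
    ring

section LinearProgram

variable {r f a b : ℝ}

lemma three_mul_one_sub_le (hba : b ≤ a) (h : 1 - r ≤ f * a + (1 - f) * b) (hf : f ≤ 2 / 3) :
    3 * (1 - r) ≤ 2 * a + b := by
  -- `2a + b - 3 (f a + (1 - f) b) = (2 - 3f)(a - b)`
  nlinarith [mul_nonneg (by linarith : (0 : ℝ) ≤ 2 - 3 * f) (sub_nonneg.2 hba)]

lemma two_mul_one_sub_div_le (hb : 0 ≤ b) (h : 1 - r ≤ f * a + (1 - f) * b) (hf : 2 / 3 ≤ f) :
    2 * (1 - r) / f ≤ 2 * a + b := by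
  rw [div_le_iff₀ (by linarith)]
  -- `f (2a + b) - 2 (f a + (1 - f) b) = (3f - 2) b`
  nlinarith [mul_nonneg hb (by linarith : (0 : ℝ) ≤ 3 * f - 2)]

lemma three_sub_div_le (ha : a ≤ 1) (h : 1 - r ≤ f * a + (1 - f) * b) (hf : 2 / 3 ≤ f)
    (hf1 : f < 1) : 3 - r / (1 - f) ≤ 2 * a + b := by
  have : 3 - (2 * a + b) ≤ r / (1 - f) := by
    rw [le_div_iff₀ (by linarith)]
    -- `(1 - f)(3 - 2a - b) - (1 - f a - (1 - f) b) = (2 - 3f)(1 - a)`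
    nlinarith [mul_nonneg (by linarith : (0 : ℝ) ≤ 3 * f - 2) (sub_nonneg.2 ha)]
  linarith

end LinearProgram

section OutageSums

variable {r f : ℝ}

lemma exists_le_of_mem_jointOutageSums {s : ℝ} (hs : s ∈ jointOutageSums r f) :
    ∃ a b : ℝ, 0 ≤ b ∧ b ≤ a ∧ a ≤ 1 ∧ 1 - r ≤ f * a + (1 - f) * b ∧ 2 * a + b ≤ s := by
  obtain ⟨v₁, v₂, vr, h₁, h₂, hr, hc, rfl⟩ := hs
  rw [max_one_sub_zero_eq, max_one_sub_zero_eq] at hc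
  refine ⟨min (min v₁ v₂) 1, min (min v₁ (min v₂ vr)) 1, ?_, ?_, min_le_right _ _, by linarith,
    ?_⟩
  · positivity
  · gcongr
    exact min_le_left _ _
  · have ha₁ : min (min v₁ v₂) 1 ≤ v₁ := (min_le_left _ _).trans (min_le_left _ _)
    have ha₂ : min (min v₁ v₂) 1 ≤ v₂ := (min_le_left _ _).trans (min_le_right _ _)
    have hb : min (min v₁ (min v₂ vr)) 1 ≤ vr :=
      (min_le_left _ _).trans ((min_le_right _ _).trans (min_le_right _ _))
    linarith

lemma two_mul_add_mem_jointOutageSums {a b : ℝ} (hb : 0 ≤ b) (hba : b ≤ a) (ha : a ≤ 1)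
    (h : 1 - r ≤ f * a + (1 - f) * b) : 2 * a + b ∈ jointOutageSums r f := by
  refine ⟨a, a, b, hb.trans hba, hb.trans hba, hb, ?_, by ring⟩
  rw [min_self, min_eq_right hba, min_eq_right hba, max_eq_left (by linarith), max_eq_left (by linarith)]
  linarith

lemma three_mul_one_sub_mem (hr0 : 0 ≤ r) (hr1 : r ≤ 1) :
    3 * (1 - r) ∈ jointOutageSums r f := by
  convert two_mul_add_mem_jointOutageSums (r := r) (f := f) (sub_nonneg.2 hr1) le_rfl
    (by linarith) (by linarith) using 1
  ring

lemma two_mul_one_sub_div_mem (hr1 : r ≤ 1) (hf : 0 < f) (hrf : 1 - r ≤ f) :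
    2 * (1 - r) / f ∈ jointOutageSums r f := by
  have ha : 0 ≤ (1 - r) / f := div_nonneg (sub_nonneg.2 hr1) hf.le
  convert two_mul_add_mem_jointOutageSums (r := r) (f := f) le_rfl ha
    ((div_le_one hf).2 hrf) (by field_simp; linarith) using 1
  ring

lemma three_sub_div_mem (hr0 : 0 ≤ r) (hfr : f < 1 - r) :
    3 - r / (1 - f) ∈ jointOutageSums r f := by
  have hf : 0 < 1 - f := by linarith
  have hq : r / (1 - f) ≤ 1 := (div_le_one hf).2 (by linarith)
  have hfq : (1 - f) * (r / (1 - f)) = r := mul_div_cancel₀ r hf.ne'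
  convert two_mul_add_mem_jointOutageSums (r := r) (f := f) (a := 1) (b := 1 - r / (1 - f))
    (by linarith) (by linarith [div_nonneg hr0 hf.le]) le_rfl (by linarith) using 1
  ring

end OutageSums

theorem lambda_one_two_inf_general (r f : ℝ) (hr0 : 0 < r) (hr1 : r ≤ 1) :
    sInf {s : ℝ | ∃ v₁ v₂ vr : ℝ, 0 ≤ v₁ ∧ 0 ≤ v₂ ∧ 0 ≤ vr ∧
        f * max (1 - min v₁ v₂) 0 + (1 - f) * max (1 - min v₁ (min v₂ vr)) 0 ≤ r ∧
        s = v₁ + v₂ + vr} =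
      (if r < 1 / 3 then
        (if f < 2 / 3 then 3 * (1 - r)
         else if f < 1 - r then 3 - r / (1 - f)
         else 2 * (1 - r) / f)
       else
        (if f < 2 / 3 then 3 * (1 - r)
         else 2 * (1 - r) / f)) := by
  refine IsLeast.csInf_eq ⟨?_, fun s hs => ?_⟩
  · split_ifs with hr hf hfr hf
    · exact three_mul_one_sub_mem hr0.le hr1
    · exact three_sub_div_mem hr0.le hfr
    · exact two_mul_one_sub_div_mem hr1 (by linarith) (by linarith)
    · exact three_mul_one_sub_mem hr0.le hr1
    · exact two_mul_one_sub_div_mem hr1 (by linarith) (by linarith)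
  · obtain ⟨a, b, hb, hba, ha, h, hs⟩ := exists_le_of_mem_jointOutageSums hs
    refine le_trans ?_ hs
    split_ifs with hr hf hfr hf
    · exact three_mul_one_sub_le hba h hf.le
    · exact three_sub_div_le ha h (not_lt.1 hf) (by linarith)
    · exact two_mul_one_sub_div_le hb h (not_lt.1 hf)
    · exact three_mul_one_sub_le hba h hf.le
    · exact two_mul_one_sub_div_le hb h (not_lt.1 hf)

/-- Computation of λ_{1,2}(f) (equations (133) and (27)): the infimum of
v₁+v₂+v_r over the joint outage region O_{1,2}⁺ of the DDF protocol in the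
MAR channel. -/
theorem lambda_one_two_inf (r f : ℝ) (hr0 : 0 < r) (hr1 : r ≤ 1)
    (hf0 : 0 ≤ f) (hf1 : f ≤ 1) :
    sInf {s : ℝ | ∃ v₁ v₂ vr : ℝ, 0 ≤ v₁ ∧ 0 ≤ v₂ ∧ 0 ≤ vr ∧
        f * max (1 - min v₁ v₂) 0 + (1 - f) * max (1 - min v₁ (min v₂ vr)) 0 ≤ r ∧
        s = v₁ + v₂ + vr} =
      (if r < 1 / 3 then
        (if f < 2 / 3 then 3 * (1 - r)
         else if f < 1 - r then 3 - r / (1 - f)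
         else 2 * (1 - r) / f)
       else
        (if f < 2 / 3 then 3 * (1 - r)
         else 2 * (1 - r) / f)) :=
  lambda_one_two_inf_general r f hr0 hr1
end

section
/- Let 0 < r and r ≤ f < 1. Then the infimum of u₁ + u₂ over all pairs (u₁, u₂) with 0 ≤ u₁, u₂ < 1 satisfying f = max{ r/(2(1−max{u₁,u₂})), r/(1−min{u₁,u₂}) } equals 2(1−r/f) if r ≤ f < 3r/2, and equals 1 − r/(2f) if f ≥ 3r/2. (This is the computation of λ(f) in equation (28) of the paper, arising from the relation (25) between the relay's listening fraction f and the exponential orders u₁, u₂ of the inverse squared source-to-relay channel gains.) -/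
/-!
Write `a = r / f ∈ (0, 1]` and `m ≤ M` for the two exponential orders. The relation forces
`M ≤ 1 - a/2` and `m ≤ 1 - a`, with equality in at least one of them. Equality in the first
gives `m + M ≥ M = 1 - a/2`, equality in the second gives `m + M ≥ 2m = 2(1 - a)`; and both
bounds are attained, by `(1 - a/2, 0)` and `(1 - a, 1 - a)`. So the infimum is the minimum
`min (2(1 - a)) (1 - a/2)`, and which of the two is smaller depends on the sign of `3a - 2`.
-/

theorem min_le_add_of_eq_max {r f m M : ℝ} (hr : r ≠ 0) (hm : 0 ≤ m) (hmM : m ≤ M) (hM : M < 1)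
    (hf : f = max (r / (2 * (1 - M))) (r / (1 - m))) :
    min (2 * (1 - r / f)) (1 - r / (2 * f)) ≤ m + M := by
  have hM' : 1 - M ≠ 0 := by linarith
  have hm' : 1 - m ≠ 0 := by linarith
  rcases max_choice (r / (2 * (1 - M))) (r / (1 - m)) with h | h <;> rw [h] at hf <;> subst hf
  · have : r / (2 * (r / (2 * (1 - M)))) = 1 - M := by field_simp
    exact (min_le_right _ _).trans (by linarith)
  · have : r / (r / (1 - m)) = 1 - m := by field_simp
    exact (min_le_left _ _).trans (by linarith)

def compatibleOrderSums (r f : ℝ) : Set ℝ :=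
  {s : ℝ | ∃ u₁ u₂ : ℝ, 0 ≤ u₁ ∧ u₁ < 1 ∧ 0 ≤ u₂ ∧ u₂ < 1 ∧
    f = max (r / (2 * (1 - max u₁ u₂))) (r / (1 - min u₁ u₂)) ∧ s = u₁ + u₂}

namespace compatibleOrderSums

variable {r f : ℝ}

theorem min_le_of_mem (hr : r ≠ 0) {s : ℝ} (hs : s ∈ compatibleOrderSums r f) :
    min (2 * (1 - r / f)) (1 - r / (2 * f)) ≤ s := by
  obtain ⟨u₁, u₂, h₁, h₁', h₂, h₂', hf, rfl⟩ := hs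
  rw [← min_add_max u₁ u₂]
  exact min_le_add_of_eq_max hr (le_min h₁ h₂) min_le_max (max_lt h₁' h₂') hf

theorem two_mul_one_sub_div_mem (hr : 0 < r) (hrf : r ≤ f) :
    2 * (1 - r / f) ∈ compatibleOrderSums r f := by
  have hf : 0 < f := hr.trans_le hrf
  have ha : r / f ≤ 1 := (div_le_one hf).2 hrf
  have ha' : 0 < r / f := div_pos hr hf
  refine ⟨1 - r / f, 1 - r / f, by linarith, by linarith, by linarith, by linarith, ?_, by ring⟩
  have h₁ : r / (r / f) = f := div_div_cancel₀ hr.ne'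
  have h₂ : r / (2 * (r / f)) = f / 2 := by field_simp
  rw [max_self, min_self, sub_sub_cancel, h₁, h₂, max_eq_right (by linarith)]

theorem one_sub_div_two_mul_mem (hr : 0 < r) (hrf : r ≤ f) :
    1 - r / (2 * f) ∈ compatibleOrderSums r f := by
  have hf : 0 < f := hr.trans_le hrf
  have ha : r / (2 * f) ≤ 1 := (div_le_one (by positivity)).2 (by linarith)
  have ha' : 0 < r / (2 * f) := by positivity
  refine ⟨1 - r / (2 * f), 0, by linarith, by linarith, le_rfl, one_pos, ?_, by ring⟩
  have h : r / (2 * (r / (2 * f))) = f := by field_simp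
  rw [max_eq_left (sub_nonneg.2 ha), min_eq_right (sub_nonneg.2 ha), sub_sub_cancel, h, sub_zero,
    div_one, max_eq_left hrf]

theorem isLeast_min (hr : 0 < r) (hrf : r ≤ f) :
    IsLeast (compatibleOrderSums r f) (min (2 * (1 - r / f)) (1 - r / (2 * f))) := by
  refine ⟨?_, fun s hs ↦ min_le_of_mem hr.ne' hs⟩
  rcases min_choice (2 * (1 - r / f)) (1 - r / (2 * f)) with h | h <;> rw [h]
  · exact two_mul_one_sub_div_mem hr hrf
  · exact one_sub_div_two_mul_mem hr hrf

end compatibleOrderSums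

theorem one_sub_div_two_mul_sub_two_mul_one_sub_div {r f : ℝ} (hf : f ≠ 0) :
    1 - r / (2 * f) - 2 * (1 - r / f) = (3 * r - 2 * f) / (2 * f) := by
  field_simp
  ring

theorem lambda_relay_inf_general (r f : ℝ) (hr : 0 < r) (hfr : r ≤ f) :
    sInf {s : ℝ | ∃ u₁ u₂ : ℝ, 0 ≤ u₁ ∧ u₁ < 1 ∧ 0 ≤ u₂ ∧ u₂ < 1 ∧
        f = max (r / (2 * (1 - max u₁ u₂))) (r / (1 - min u₁ u₂)) ∧
        s = u₁ + u₂} =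
      (if f < 3 * r / 2 then 2 * (1 - r / f) else 1 - r / (2 * f)) := by
  have hf : 0 < f := hr.trans_le hfr
  change sInf (compatibleOrderSums r f) = _
  rw [(compatibleOrderSums.isLeast_min hr hfr).csInf_eq]
  have hdiff := one_sub_div_two_mul_sub_two_mul_one_sub_div (r := r) hf.ne'
  split_ifs with h
  · refine min_eq_left (sub_nonneg.1 ?_)
    rw [hdiff]
    exact div_nonneg (by linarith) (by positivity)
  · refine min_eq_right (sub_nonpos.1 ?_)
    rw [hdiff]
    exact div_nonpos_of_nonpos_of_nonneg (by linarith) (by positivity)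

/-- Computation of λ(f) (equation (28)): the infimum of u₁+u₂ over exponential
orders of the source-to-relay channels compatible with relay listening
fraction f via relation (25). -/
theorem lambda_relay_inf (r f : ℝ) (hr : 0 < r) (hfr : r ≤ f) (hf1 : f < 1) :
    sInf {s : ℝ | ∃ u₁ u₂ : ℝ, 0 ≤ u₁ ∧ u₁ < 1 ∧ 0 ≤ u₂ ∧ u₂ < 1 ∧
        f = max (r / (2 * (1 - max u₁ u₂))) (r / (1 - min u₁ u₂)) ∧
        s = u₁ + u₂} =
      (if f < 3 * r / 2 then 2 * (1 - r / f) else 1 - r / (2 * f)) :=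
  lambda_relay_inf_general r f hr hfr
end

section
/- Let 0 < r ≤ 1. Define λ(f) = min{2(1−r/f), 1 − r/(2f)} for f > 0, and define λ_{1}(f) = 2−r for 0 ≤ f < 1/2, λ_{1}(f) = 2 − r/(2(1−f)) for 1/2 ≤ f < 1−r/2, and λ_{1}(f) = (2−r)/(2f) for 1−r/2 ≤ f ≤ 1. Then the infimum of λ(f) + λ_{1}(f) over f ∈ [r, 1] equals: 2−r if 0 < r ≤ 1/2; (4−5r)/(2(1−r)) if 1/2 ≤ r ≤ 2/3; and (2−r)/(2r) if 2/3 ≤ r ≤ 1. (This is the computation of the single-user error exponent d_{1}(r) in equation (29) of the paper for the DDF protocol in the multiple access relay channel.) -/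
/-!
Since `λ(r) = 0`, the infimum is attained at `f = r` once `λ₁(r) ≤ λ(f) + λ₁(f)` on `[r, 1]`.
For the branch `1 - r/(2f)` of `λ` this already holds with `2 - r ≥ λ₁(r)` on the left; for the
branch `2(1 - r/f)` one splits according to the pieces of `λ₁` at `r` and at `f`. Each case
becomes a polynomial inequality after clearing denominators.
-/

/-- The paper's `λ(f)`. -/
noncomputable def relayExponent (r f : ℝ) : ℝ :=
  min (2 * (1 - r / f)) (1 - r / (2 * f))

/-- The paper's `λ₁(f)`. -/
noncomputable def destExponent (r f : ℝ) : ℝ :=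
  if f < 1 / 2 then 2 - r
  else if f < 1 - r / 2 then 2 - r / (2 * (1 - f))
  else (2 - r) / (2 * f)

section

variable {r f : ℝ}

lemma relayExponent_self (hr : r ≠ 0) : relayExponent r r = 0 := by
  have : r / (2 * r) = 1 / 2 := by field_simp
  rw [relayExponent, div_self hr, this]
  norm_num

lemma destExponent_self (r : ℝ) :
    destExponent r r =
      if r ≤ 1 / 2 then 2 - r
      else if r ≤ 2 / 3 then (4 - 5 * r) / (2 * (1 - r))
      else (2 - r) / (2 * r) := by
  unfold destExponent
  rcases lt_trichotomy r (1 / 2) with h | rfl | h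
  · simp only [h, h.le, if_true]
  · norm_num
  rcases lt_trichotomy r (2 / 3) with h' | rfl | h'
  · simp only [show ¬r < 1 / 2 by linarith, show r < 1 - r / 2 by linarith,
      show ¬r ≤ 1 / 2 by linarith, h'.le, if_true, if_false]
    have : 1 - r ≠ 0 := by linarith
    field_simp
    ring
  · norm_num
  · simp only [show ¬r < 1 / 2 by linarith, show ¬r < 1 - r / 2 by linarith,
      show ¬r ≤ 1 / 2 by linarith, show ¬r ≤ 2 / 3 by linarith, if_false]

lemma destExponent_le_two_sub (hr0 : 0 ≤ r) (hr1 : r ≤ 1) (x : ℝ) :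
    destExponent r x ≤ 2 - r := by
  unfold destExponent
  split_ifs with h₁ h₂
  · exact le_rfl
  · have : r ≤ r / (2 * (1 - x)) := by rw [le_div_iff₀ (by linarith)]; nlinarith
    linarith
  · rw [div_le_iff₀ (by linarith)]
    nlinarith

lemma two_sub_le_add_destExponent (hr : 0 < r) (hrf : r ≤ f) (hf1 : f ≤ 1) :
    2 - r ≤ 1 - r / (2 * f) + destExponent r f := by
  have hf : 0 < f := hr.trans_le hrf
  rw [← sub_nonneg]
  unfold destExponent
  split_ifs with h₁ h₂
  · have : r / (2 * f) ≤ 1 / 2 := by rw [div_le_iff₀ (by positivity)]; linarith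
    linarith
  · have h1f : 0 < 1 - f := by linarith
    have key : 1 - r / (2 * f) + (2 - r / (2 * (1 - f))) - (2 - r) =
        ((1 + r) * 2 * f * (1 - f) - r) / (2 * f * (1 - f)) := by
      field_simp; ring
    rw [key]
    refine div_nonneg ?_ (by positivity)
    nlinarith [mul_pos hf h1f, sq_nonneg (f - 1 / 2), mul_nonneg hr.le (sub_nonneg.2 hf1)]
  · have key : 1 - r / (2 * f) + (2 - r) / (2 * f) - (2 - r) = (1 - r) * (1 - f) / f := by
      field_simp; ring
    rw [key]
    exact div_nonneg (mul_nonneg (by linarith) (by linarith)) hf.le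

lemma le_two_mul_add_destExponent_of_le_half (hr : 0 < r) (hr2 : r ≤ 1 / 2) (hrf : r ≤ f) :
    2 - r ≤ 2 * (1 - r / f) + destExponent r f := by
  have hf : 0 < f := hr.trans_le hrf
  rw [← sub_nonneg]
  unfold destExponent
  split_ifs with h₁ h₂
  · have : r / f ≤ 1 := (div_le_one hf).2 hrf
    linarith
  · have h1f : 0 < 1 - f := by linarith
    have key : 2 * (1 - r / f) + (2 - r / (2 * (1 - f))) - (2 - r) =
        ((2 + r) * 2 * f * (1 - f) - (4 * r * (1 - f) + r * f)) / (2 * f * (1 - f)) := by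
      field_simp; ring
    rw [key]
    refine div_nonneg ?_ (by positivity)
    nlinarith [mul_pos hf h1f, sq_nonneg (f - 1 / 2), sq_nonneg (r - f),
      mul_nonneg (sub_nonneg.2 hrf) h1f.le]
  · have key : 2 * (1 - r / f) + (2 - r) / (2 * f) - (2 - r) =
        (2 * r * f + 2 - 5 * r) / (2 * f) := by
      field_simp; ring
    rw [key]
    refine div_nonneg ?_ (by positivity)
    nlinarith

lemma le_two_mul_add_destExponent_of_half_lt (hr2 : 1 / 2 < r) (hr3 : r ≤ 2 / 3) (hrf : r ≤ f) :
    (4 - 5 * r) / (2 * (1 - r)) ≤ 2 * (1 - r / f) + destExponent r f := by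
  have hf : 0 < f := by linarith
  have h1r : 0 < 1 - r := by linarith
  rw [← sub_nonneg]
  unfold destExponent
  split_ifs with h₁ h₂
  · linarith
  · have h1f : 0 < 1 - f := by linarith
    have key : 2 * (1 - r / f) + (2 - r / (2 * (1 - f))) - (4 - 5 * r) / (2 * (1 - r)) =
        (16 * f * (1 - f) * (1 - r) - 8 * r * (1 - f) * (1 - r) - 2 * r * f * (1 - r)
          - (4 - 5 * r) * 2 * f * (1 - f)) / (4 * f * (1 - f) * (1 - r)) := by
      field_simp; ring
    rw [key]
    refine div_nonneg ?_ (by positivity)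
    nlinarith [mul_pos hf h1f, mul_pos h1f h1r, sq_nonneg (f - 1 / 2), sq_nonneg (r - 1 / 2),
      mul_nonneg (sub_nonneg.2 hrf) h1f.le, mul_nonneg (sub_nonneg.2 hrf) h1r.le,
      mul_nonneg (sub_nonneg.2 (not_lt.1 h₁)) h1r.le]
  · have key : 2 * (1 - r / f) + (2 - r) / (2 * f) - (4 - 5 * r) / (2 * (1 - r)) =
        (8 * f * (1 - r) - 8 * r * (1 - r) + 2 * (2 - r) * (1 - r) - (4 - 5 * r) * 2 * f) /
          (4 * f * (1 - r)) := by
      field_simp; ring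
    rw [key]
    refine div_nonneg ?_ (by positivity)
    nlinarith [mul_nonneg (sub_nonneg.2 hrf) h1r.le, sq_nonneg (r - 2 / 3),
      mul_nonneg (sub_nonneg.2 (not_lt.1 h₂)) h1r.le]

lemma le_two_mul_add_destExponent_of_two_thirds_lt (hr3 : 2 / 3 < r) (hrf : r ≤ f) :
    (2 - r) / (2 * r) ≤ 2 * (1 - r / f) + destExponent r f := by
  have hr : 0 < r := by linarith
  have hf : 0 < f := by linarith
  have hf' : ¬f < 1 / 2 ∧ ¬f < 1 - r / 2 := ⟨by linarith, by linarith⟩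
  rw [destExponent, if_neg hf'.1, if_neg hf'.2, ← sub_nonneg]
  have key : 2 * (1 - r / f) + (2 - r) / (2 * f) - (2 - r) / (2 * r) =
      (4 * r * f - 4 * r ^ 2 + r * (2 - r) - f * (2 - r)) / (2 * r * f) := by
    field_simp; ring
  rw [key]
  refine div_nonneg ?_ (by positivity)
  nlinarith [mul_nonneg (sub_nonneg.2 hrf) hr.le, sq_nonneg (r - 2 / 3)]

lemma destExponent_self_le_two_mul_add (hr : 0 < r) (hrf : r ≤ f) :
    destExponent r r ≤ 2 * (1 - r / f) + destExponent r f := by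
  rw [destExponent_self]
  split_ifs with h₁ h₂
  · exact le_two_mul_add_destExponent_of_le_half hr h₁ hrf
  · exact le_two_mul_add_destExponent_of_half_lt (not_le.1 h₁) h₂ hrf
  · exact le_two_mul_add_destExponent_of_two_thirds_lt (not_le.1 h₂) hrf

lemma destExponent_self_le (hr : 0 < r) (hrf : r ≤ f) (hf1 : f ≤ 1) :
    destExponent r r ≤ relayExponent r f + destExponent r f := by
  rw [relayExponent, ← min_add_add_right]
  refine le_min (destExponent_self_le_two_mul_add hr hrf) ?_
  calc destExponent r r ≤ 2 - r := destExponent_le_two_sub hr.le (hrf.trans hf1) r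
    _ ≤ 1 - r / (2 * f) + destExponent r f := two_sub_le_add_destExponent hr hrf hf1

end

/-- Computation of the single-user error exponent d_{1}(r) (equation (29)):
the infimum over f ∈ [r,1] of λ(f) + λ_{1}(f) for the DDF protocol in the
MAR channel. -/
theorem d_one_inf (r : ℝ) (hr0 : 0 < r) (hr1 : r ≤ 1) :
    sInf {y : ℝ | ∃ f : ℝ, r ≤ f ∧ f ≤ 1 ∧
        y = min (2 * (1 - r / f)) (1 - r / (2 * f)) +
          (if f < 1 / 2 then 2 - r
           else if f < 1 - r / 2 then 2 - r / (2 * (1 - f))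
           else (2 - r) / (2 * f))} =
      (if r ≤ 1 / 2 then 2 - r
       else if r ≤ 2 / 3 then (4 - 5 * r) / (2 * (1 - r))
       else (2 - r) / (2 * r)) := by
  have hleast : IsLeast {y : ℝ | ∃ f : ℝ, r ≤ f ∧ f ≤ 1 ∧
      y = relayExponent r f + destExponent r f} (destExponent r r) := by
    refine ⟨⟨r, le_rfl, hr1, by rw [relayExponent_self hr0.ne', zero_add]⟩, ?_⟩
    rintro y ⟨f, hrf, hf1, rfl⟩
    exact destExponent_self_le hr0 hrf hf1
  rw [← destExponent_self]
  exact hleast.csInf_eq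
end

section
/- Let 0 < r₁ < 2 and 0 ≤ f ≤ 1. Then the infimum of v₁ + v₂ + v₃ + v₄ over all (v₁, v₂, v₃, v₄) ∈ ℝ⁴ with v₁, v₂, v₃, v₄ ≥ 0 satisfying (1+f)·(1−min{v₃, v₄})⁺ + (1−f)·(1−min{v₁, v₂, v₃, v₄})⁺ ≤ r₁/2 equals 4 − r₁/(1−f) if 0 ≤ f < 1−r₁/2, and equals (4−r₁)/(1+f) if 1−r₁/2 ≤ f ≤ 1. (This is the computation of λ_i(f) in equation (81) of the paper, arising from the inferior-user outage region O_i^{2+} of equation (77) in the ARQ-DDF protocol for the cooperative vector multiple access channel.) -/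
/-!
Write `a = min v₃ v₄` and `m = min(v₁, v₂, a)`, so that `v₁ + v₂ + v₃ + v₄ ≥ 2a + 2m`, and put
`x = 1 - a`, `y = 1 - m ≤ 1`. The constraint bounds `(1 + f) x⁺ + (1 - f) y⁺`, which dominates
both `(1 - f)(x + y)` and `(1 + f)(x + y) - 2f`; these give the two lower bounds
`4 - r₁/(1 - f)` and `(4 - r₁)/(1 + f)`, and the larger one is attained at `(m, m, 1, 1)`,
resp. `(0, 0, a, a)`.
-/

section WeightedPositivePart

variable {f x y : ℝ}

lemma one_sub_mul_add_le_weighted_posPart (hf0 : 0 ≤ f) (hf1 : f ≤ 1) :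
    (1 - f) * (x + y) ≤ (1 + f) * max x 0 + (1 - f) * max y 0 := by
  have hx : 0 ≤ (1 - f) * (max x 0 - x) :=
    mul_nonneg (by linarith) (sub_nonneg.mpr (le_max_left x 0))
  have hy : 0 ≤ (1 - f) * (max y 0 - y) :=
    mul_nonneg (by linarith) (sub_nonneg.mpr (le_max_left y 0))
  have hx0 : 0 ≤ f * max x 0 := mul_nonneg hf0 (le_max_right x 0)
  linarith

lemma one_add_mul_add_le_weighted_posPart (hf0 : 0 ≤ f) (hf1 : f ≤ 1) (hy1 : y ≤ 1) :
    (1 + f) * (x + y) ≤ (1 + f) * max x 0 + (1 - f) * max y 0 + 2 * f := by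
  have hx : 0 ≤ (1 + f) * (max x 0 - x) :=
    mul_nonneg (by linarith) (sub_nonneg.mpr (le_max_left x 0))
  have hy : 0 ≤ (1 - f) * (max y 0 - y) :=
    mul_nonneg (by linarith) (sub_nonneg.mpr (le_max_left y 0))
  have hy' : 0 ≤ f * (1 - y) := mul_nonneg hf0 (by linarith)
  linarith

end WeightedPositivePart

section OutageRegion

variable {r₁ f : ℝ}

noncomputable def lambdaInferior (r₁ f : ℝ) : ℝ :=
  if f < 1 - r₁ / 2 then 4 - r₁ / (1 - f) else (4 - r₁) / (1 + f)

lemma lambdaInferior_le_of_constraint {a m : ℝ} (hf0 : 0 ≤ f) (hf1 : f ≤ 1) (hm0 : 0 ≤ m)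
    (hcon : (1 + f) * max (1 - a) 0 + (1 - f) * max (1 - m) 0 ≤ r₁ / 2) :
    lambdaInferior r₁ f ≤ 2 * a + 2 * m := by
  have hr : 0 ≤ r₁ / 2 := le_trans (add_nonneg (mul_nonneg (by linarith) (le_max_right _ _))
    (mul_nonneg (by linarith) (le_max_right _ _))) hcon
  unfold lambdaInferior
  split_ifs with hcase
  · have hf : 0 < 1 - f := by linarith
    have := one_sub_mul_add_le_weighted_posPart (x := 1 - a) (y := 1 - m) hf0 hf1
    rw [sub_le_iff_le_add, ← sub_le_iff_le_add', le_div_iff₀ hf]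
    linarith
  · have := one_add_mul_add_le_weighted_posPart (x := 1 - a) hf0 hf1 (by linarith : 1 - m ≤ 1)
    rw [div_le_iff₀ (by linarith)]
    linarith

def outageSums (r₁ f : ℝ) : Set ℝ :=
  {s : ℝ | ∃ v₁ v₂ v₃ v₄ : ℝ, 0 ≤ v₁ ∧ 0 ≤ v₂ ∧ 0 ≤ v₃ ∧ 0 ≤ v₄ ∧
    (1 + f) * max (1 - min v₃ v₄) 0 +
      (1 - f) * max (1 - min v₁ (min v₂ (min v₃ v₄))) 0 ≤ r₁ / 2 ∧
    s = v₁ + v₂ + v₃ + v₄}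

lemma lambdaInferior_le_of_mem_outageSums {s : ℝ} (hf0 : 0 ≤ f) (hf1 : f ≤ 1) (hs : s ∈ outageSums r₁ f) :
    lambdaInferior r₁ f ≤ s := by
  obtain ⟨v₁, v₂, v₃, v₄, h₁, h₂, h₃, h₄, hcon, rfl⟩ := hs
  have hm0 : 0 ≤ min v₁ (min v₂ (min v₃ v₄)) := le_min h₁ (le_min h₂ (le_min h₃ h₄))
  refine (lambdaInferior_le_of_constraint hf0 hf1 hm0 hcon).trans ?_
  have := min_le_left v₃ v₄
  have := min_le_right v₃ v₄
  have := min_le_left v₁ (min v₂ (min v₃ v₄))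
  have := (min_le_right v₁ (min v₂ (min v₃ v₄))).trans (min_le_left v₂ (min v₃ v₄))
  linarith

lemma mem_outageSums_of_pairs {m a : ℝ} (hm0 : 0 ≤ m) (hma : m ≤ a) (ha1 : a ≤ 1)
    (hcon : (1 + f) * (1 - a) + (1 - f) * (1 - m) = r₁ / 2) :
    2 * m + 2 * a ∈ outageSums r₁ f := by
  refine ⟨m, m, a, a, hm0, hm0, hm0.trans hma, hm0.trans hma, ?_, by ring⟩
  rw [min_self, min_eq_left hma, min_self, max_eq_left (by linarith),
    max_eq_left (by linarith), hcon]

lemma lambdaInferior_mem_outageSums (hr0 : 0 < r₁) (hr2 : r₁ < 2) (hf0 : 0 ≤ f) :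
    lambdaInferior r₁ f ∈ outageSums r₁ f := by
  unfold lambdaInferior
  split_ifs with hcase
  · have hf : 0 < 1 - f := by linarith
    have hq1 : r₁ / (2 * (1 - f)) ≤ 1 := by rw [div_le_one (by linarith)]; linarith
    have hq0 : 0 ≤ r₁ / (2 * (1 - f)) := by positivity
    convert mem_outageSums_of_pairs (r₁ := r₁) (f := f) (m := 1 - r₁ / (2 * (1 - f))) (a := 1)
      (by linarith) (by linarith) le_rfl (by field_simp; ring) using 1
    field_simp; ring
  · have hf : 0 < 1 + f := by linarith
    have ha0 : 0 ≤ (2 - r₁ / 2) / (1 + f) := div_nonneg (by linarith) hf.le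
    have ha1 : (2 - r₁ / 2) / (1 + f) ≤ 1 := by rw [div_le_one hf]; linarith
    convert mem_outageSums_of_pairs (r₁ := r₁) (f := f) le_rfl ha0 ha1 (by field_simp; ring)
      using 1
    field_simp; ring

end OutageRegion

/-- Computation of λ_i(f) (equation (81)): the infimum of
v_ss+v_si+v_is+v_ii over the inferior-user outage region O_i^{2+} of
equation (77) in the ARQ-DDF protocol for the CVMA channel. -/
theorem lambda_inferior_inf (r₁ f : ℝ) (hr0 : 0 < r₁) (hr2 : r₁ < 2)
    (hf0 : 0 ≤ f) (hf1 : f ≤ 1) :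
    sInf {s : ℝ | ∃ v₁ v₂ v₃ v₄ : ℝ, 0 ≤ v₁ ∧ 0 ≤ v₂ ∧ 0 ≤ v₃ ∧ 0 ≤ v₄ ∧
        (1 + f) * max (1 - min v₃ v₄) 0 +
          (1 - f) * max (1 - min v₁ (min v₂ (min v₃ v₄))) 0 ≤ r₁ / 2 ∧
        s = v₁ + v₂ + v₃ + v₄} =
      (if f < 1 - r₁ / 2 then 4 - r₁ / (1 - f) else (4 - r₁) / (1 + f)) := by
  exact IsLeast.csInf_eq ⟨lambdaInferior_mem_outageSums hr0 hr2 hf0,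
    fun _ ↦ lambdaInferior_le_of_mem_outageSums hf0 hf1⟩
end

section
/- Let 0 < r₁ ≤ 2. Define λ_i(f) = 4 − r₁/(1−f) for 0 ≤ f < 1−r₁/2 and λ_i(f) = (4−r₁)/(1+f) for 1−r₁/2 ≤ f ≤ 1. Then the infimum of λ_i(f) + 1 − r₁/(2f) over f ∈ [r₁/2, 1] equals 3 − r₁ if 0 < r₁ < 1, and equals 2(4−r₁)/(2+r₁) if 1 ≤ r₁ ≤ 2. (This is the computation of the inferior-user error exponent d_i(r₁) in equation (84) of the paper for the ARQ-DDF protocol in the cooperative vector multiple access channel, where 1 − r₁/(2f) is the minimum exponential order u of the inter-user channel compatible with listening fraction f from equation (83).) -/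
/-!
On each of the three regimes (`f < 1 - r₁/2`; `f ≥ 1 - r₁/2` with `r₁ < 1`; `r₁ ≥ 1`) the objective
minus the claimed minimum is a quadratic in `f` with non-positive leading coefficient over a positive
denominator. A concave quadratic that is non-negative at both ends of an interval is non-negative on
it, so the bound reduces to its values at the ends of the regime. The minimum is attained at `f = 1`
when `r₁ < 1` and at `f = r₁/2` otherwise.
-/

open Set

lemma quadratic_nonneg_of_mem_Icc {a b c s t x : ℝ} (ha : a ≤ 0)
    (hs : 0 ≤ a * s ^ 2 + b * s + c) (ht : 0 ≤ a * t ^ 2 + b * t + c) (hx : x ∈ Icc s t) :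
    0 ≤ a * x ^ 2 + b * x + c := by
  obtain ⟨hsx, hxt⟩ := hx
  rcases hsx.eq_or_lt with rfl | hsx'
  · exact hs
  have interp : (t - s) * (a * x ^ 2 + b * x + c) =
      (t - x) * (a * s ^ 2 + b * s + c) + (x - s) * (a * t ^ 2 + b * t + c)
        - a * (t - s) * (x - s) * (t - x) := by ring
  have hrhs : 0 ≤ (t - x) * (a * s ^ 2 + b * s + c) + (x - s) * (a * t ^ 2 + b * t + c)
      - a * (t - s) * (x - s) * (t - x) := by
    have h1 := mul_nonneg (sub_nonneg.2 hxt) hs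
    have h2 := mul_nonneg (sub_nonneg.2 hsx) ht
    have h3 : a * (t - s) * (x - s) * (t - x) ≤ 0 :=
      mul_nonpos_of_nonpos_of_nonneg
        (mul_nonpos_of_nonpos_of_nonneg (mul_nonpos_of_nonpos_of_nonneg ha (by linarith))
          (sub_nonneg.2 hsx)) (sub_nonneg.2 hxt)
    linarith
  exact nonneg_of_mul_nonneg_right (interp ▸ hrhs) (by linarith)

section Regimes

variable {r f : ℝ}

lemma three_sub_le_of_lt_one_sub_half (hr : 0 < r) (hf₁ : r / 2 ≤ f) (hf₂ : f < 1 - r / 2) :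
    3 - r ≤ 4 - r / (1 - f) + 1 - r / (2 * f) := by
  have hr1 : 0 ≤ 1 - r := by linarith
  have hP : 0 ≤ -2 * (2 + r) * f ^ 2 + (4 + r) * f - r := by
    refine quadratic_nonneg_of_mem_Icc (s := r / 2) (t := 1 - r / 2) (by linarith) ?_ ?_
      ⟨hf₁, hf₂.le⟩
    · nlinarith [mul_nonneg (mul_nonneg hr.le hr1) (by linarith : (0 : ℝ) ≤ 2 + r)]
    · nlinarith [mul_nonneg (mul_nonneg hr.le hr.le) hr1]
  have hD : 0 < 2 * f * (1 - f) := mul_pos (by linarith) (by linarith)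
  have key : 4 - r / (1 - f) + 1 - r / (2 * f) - (3 - r) =
      (-2 * (2 + r) * f ^ 2 + (4 + r) * f - r) / (2 * f * (1 - f)) := by
    field_simp [(by linarith : 1 - f ≠ 0), (by linarith : f ≠ 0)]
    ring
  exact sub_nonneg.1 (key ▸ div_nonneg hP hD.le)

lemma three_sub_le_of_one_sub_half_le (hr : 0 < r) (hr1 : r < 1) (hf₁ : 1 - r / 2 ≤ f)
    (hf₂ : f ≤ 1) :
    3 - r ≤ (4 - r) / (1 + f) + 1 - r / (2 * f) := by
  have hP : 0 ≤ 2 * (r - 2) * f ^ 2 + (4 - r) * f - r := by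
    refine quadratic_nonneg_of_mem_Icc (s := 1 - r / 2) (t := 1) (by linarith) ?_ ?_ ⟨hf₁, hf₂⟩
    · nlinarith [mul_nonneg (mul_nonneg hr.le (by linarith : (0 : ℝ) ≤ 1 - r))
        (by linarith : (0 : ℝ) ≤ 7 - r)]
    · nlinarith
  have hD : 0 < 2 * f * (1 + f) := mul_pos (by linarith) (by linarith)
  have key : (4 - r) / (1 + f) + 1 - r / (2 * f) - (3 - r) =
      (2 * (r - 2) * f ^ 2 + (4 - r) * f - r) / (2 * f * (1 + f)) := by
    field_simp [(by linarith : 1 + f ≠ 0), (by linarith : f ≠ 0)]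
    ring
  exact sub_nonneg.1 (key ▸ div_nonneg hP hD.le)

lemma two_mul_four_sub_div_le (hr1 : 1 ≤ r) (hr2 : r ≤ 2) (hf₁ : r / 2 ≤ f) (hf₂ : f ≤ 1) :
    2 * (4 - r) / (2 + r) ≤ (4 - r) / (1 + f) + 1 - r / (2 * f) := by
  have hP : 0 ≤ 6 * (r - 2) * f ^ 2 + (4 + 8 * r - 3 * r ^ 2) * f - (2 * r + r ^ 2) := by
    refine quadratic_nonneg_of_mem_Icc (s := r / 2) (t := 1) (by linarith) ?_ ?_ ⟨hf₁, hf₂⟩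
    · nlinarith
    · nlinarith [mul_nonneg (by linarith : (0 : ℝ) ≤ r - 1) (by linarith : (0 : ℝ) ≤ 2 - r)]
  have hD : 0 < 2 * f * (1 + f) * (2 + r) :=
    mul_pos (mul_pos (by linarith) (by linarith)) (by linarith)
  have key : (4 - r) / (1 + f) + 1 - r / (2 * f) - 2 * (4 - r) / (2 + r) =
      (6 * (r - 2) * f ^ 2 + (4 + 8 * r - 3 * r ^ 2) * f - (2 * r + r ^ 2)) /
        (2 * f * (1 + f) * (2 + r)) := by
    field_simp [(by linarith : 1 + f ≠ 0), (by linarith : f ≠ 0), (by linarith : 2 + r ≠ 0)]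
    ring
  exact sub_nonneg.1 (key ▸ div_nonneg hP hD.le)

end Regimes

/-- Computation of the inferior-user error exponent d_i(r₁) (equation (84)):
the infimum over f ∈ [r₁/2, 1] of λ_i(f) + (1 − r₁/(2f)) for the ARQ-DDF
protocol in the CVMA channel. -/
theorem d_inferior_inf (r₁ : ℝ) (hr0 : 0 < r₁) (hr2 : r₁ ≤ 2) :
    sInf {y : ℝ | ∃ f : ℝ, r₁ / 2 ≤ f ∧ f ≤ 1 ∧
        y = (if f < 1 - r₁ / 2 then 4 - r₁ / (1 - f) else (4 - r₁) / (1 + f)) +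
          1 - r₁ / (2 * f)} =
      (if r₁ < 1 then 3 - r₁ else 2 * (4 - r₁) / (2 + r₁)) := by
  refine IsLeast.csInf_eq ⟨?_, ?_⟩
  · split_ifs with hr1
    · exact ⟨1, by linarith, le_rfl, by rw [if_neg (by linarith)]; ring⟩
    · refine ⟨r₁ / 2, le_rfl, by linarith, ?_⟩
      rw [if_neg (by linarith)]
      field_simp
      ring
  · rintro y ⟨f, hf₁, hf₂, rfl⟩
    split_ifs with hr1 hf hf
    · exact three_sub_le_of_lt_one_sub_half hr0 hf₁ hf
    · exact three_sub_le_of_one_sub_half_le hr0 hr1 (not_lt.1 hf) hf₂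
    · linarith
    · exact two_mul_four_sub_div_le (not_lt.1 hr1) hr2 hf₁ hf₂
end

section
/- Let 0 < r₁ ≤ 2. Consider the infimum of v_ss + v_si + v_is + v_ii + u over all (v_ss, v_si, v_is, v_ii, u) ∈ ℝ⁵ with all coordinates ≥ 0 satisfying: (i) (1 − min{v_is, v_ii})⁺ ≤ r₁/4; (ii) (1 − v_ss − (1−v_is)⁺)⁺ ≤ r₁/2; and (iii) the superiority ordering 1 − v_ss − (1−v_is)⁺ ≥ max{ 1 − v_si − (1−v_ii)⁺, 1 − v_is − (1−v_ss)⁺, 1 − v_ii − (1−v_si)⁺ }. This infimum equals 4 − 2r₁ if 0 < r₁ < 4/3, and equals 2 − r₁/2 if 4/3 ≤ r₁ ≤ 2. (This is the computation of d_{s,ji}(r₁) in equation (102) of the paper, over the outage region O_{s,ji}^{1,2+} of equation (103) intersected with the superiority condition (82).) -/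
/-!
Condition (i) forces `v_is, v_ii ≥ 1 - r₁/4`, so both interference terms `(1 - v_is)⁺`,
`(1 - v_ii)⁺` are at most `r₁/4`. Condition (ii), and through the superiority condition (iii)
also the competing pair, then force `v_ss, v_si ≥ 1 - 3r₁/4`. Hence the sum is at least
`2 (1 - 3r₁/4)⁺ + 2 (1 - r₁/4)`, which is attained at `v_ss = v_si = (1 - 3r₁/4)⁺`,
`v_is = v_ii = 1 - r₁/4`, `u = 0`; this value is `4 - 2r₁` or `2 - r₁/2` according as
`r₁ < 4/3` or not.
-/

lemma sub_sub_max_one_sub_le {a b : ℝ} (h : a ≤ b) :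
    1 - b - max (1 - a) 0 ≤ 1 - a - max (1 - b) 0 := by
  rcases max_cases (1 - a) 0 with ⟨ha, _⟩ | ⟨ha, _⟩ <;>
    rcases max_cases (1 - b) 0 with ⟨hb, _⟩ | ⟨hb, _⟩ <;> linarith

lemma two_mul_max_add_le_sum {r vss vsi vis vii : ℝ} (hss : 0 ≤ vss) (hsi : 0 ≤ vsi)
    (hi : max (1 - min vis vii) 0 ≤ r / 4)
    (hii : max (1 - vss - max (1 - vis) 0) 0 ≤ r / 2)
    (hiii : 1 - vsi - max (1 - vii) 0 ≤ 1 - vss - max (1 - vis) 0) :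
    2 * max (1 - 3 * r / 4) 0 + 2 * (1 - r / 4) ≤ vss + vsi + vis + vii := by
  have hMis : max (1 - vis) 0 ≤ r / 4 :=
    (max_le_max_right 0 (sub_le_sub_left (min_le_left vis vii) 1)).trans hi
  have hMii : max (1 - vii) 0 ≤ r / 4 :=
    (max_le_max_right 0 (sub_le_sub_left (min_le_right vis vii) 1)).trans hi
  have hs : 1 - vss - max (1 - vis) 0 ≤ r / 2 := (le_max_left _ _).trans hii
  have hvss : max (1 - 3 * r / 4) 0 ≤ vss := max_le (by linarith) hss
  have hvsi : max (1 - 3 * r / 4) 0 ≤ vsi := max_le (by linarith) hsi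
  linarith [le_max_left (1 - vis) 0, le_max_left (1 - vii) 0]

lemma two_mul_max_add_eq_ite (r : ℝ) :
    2 * max (1 - 3 * r / 4) 0 + 2 * (1 - r / 4) =
      if r < 4 / 3 then 4 - 2 * r else 2 - r / 2 := by
  split_ifs with h
  · rw [max_eq_left (by linarith)]; ring
  · rw [max_eq_right (by linarith)]; ring

/-- Computation of d_{s,ji}(r₁) (equation (102)): the infimum of
v_ss+v_si+v_is+v_ii+u over the outage region O_{s,ji}^{1,2+} of equation (103)
intersected with the superiority condition (82). -/
theorem d_s_ji_inf (r₁ : ℝ) (hr0 : 0 < r₁) (hr2 : r₁ ≤ 2) :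
    sInf {s : ℝ | ∃ vss vsi vis vii u : ℝ,
        0 ≤ vss ∧ 0 ≤ vsi ∧ 0 ≤ vis ∧ 0 ≤ vii ∧ 0 ≤ u ∧
        max (1 - min vis vii) 0 ≤ r₁ / 4 ∧
        max (1 - vss - max (1 - vis) 0) 0 ≤ r₁ / 2 ∧
        1 - vss - max (1 - vis) 0 ≥
          max (1 - vsi - max (1 - vii) 0)
            (max (1 - vis - max (1 - vss) 0) (1 - vii - max (1 - vsi) 0)) ∧
        s = vss + vsi + vis + vii + u} =
      (if r₁ < 4 / 3 then 4 - 2 * r₁ else 2 - r₁ / 2) := by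
  rw [← two_mul_max_add_eq_ite]
  set a := max (1 - 3 * r₁ / 4) 0
  have hab : a ≤ 1 - r₁ / 4 := max_le (by linarith) (by linarith)
  have hb : max (1 - (1 - r₁ / 4)) 0 = r₁ / 4 := by
    rw [max_eq_left (by linarith)]; ring
  refine IsLeast.csInf_eq ⟨⟨a, a, 1 - r₁ / 4, 1 - r₁ / 4, 0, le_max_right _ _, le_max_right _ _,
    by linarith, by linarith, le_rfl, ?_, ?_, ?_, by ring⟩, ?_⟩
  · rw [min_self, hb]
  · rw [hb]
    exact max_le (by linarith [le_max_left (1 - 3 * r₁ / 4) 0]) (by linarith)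
  · rw [max_self]
    exact max_le le_rfl (sub_sub_max_one_sub_le hab)
  · rintro _ ⟨vss, vsi, vis, vii, u, hss, hsi, -, -, hu, hi, hii, hiii, rfl⟩
    linarith [two_mul_max_add_le_sum hss hsi hi hii ((le_max_left _ _).trans hiii)]
end

section
/- Let 0 < r₁ ≤ 2. Consider the infimum of v_ss + v_si + v_is + v_ii + u over all (v_ss, v_si, v_is, v_ii, u) ∈ ℝ⁵ with all coordinates ≥ 0 satisfying: (i) (1 − min{v_ss, v_si})⁺ ≤ r₁/4; and (ii) the superiority ordering 1 − v_ss − (1−v_is)⁺ ≥ max{ 1 − v_si − (1−v_ii)⁺, 1 − v_is − (1−v_ss)⁺, 1 − v_ii − (1−v_si)⁺ }. This infimum equals 4 − r₁. (This is the computation of d_{s,js}(r₁) in equation (108) of the paper, over the outage region O_{s,js}^{1,2+} of equation (106) intersected with the superiority condition (82).) -/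
/-!
Condition (i) forces `v_ss, v_si ≥ 1 - r₁/4`, and the last comparison in the superiority
condition (ii) gives `v_is + v_ii ≥ v_ss + 1 - r₁/4`; adding up yields `4 - r₁`.
The symmetric point `v_ss = v_si = v_is = v_ii = 1 - r₁/4`, `u = 0` attains it.
-/

theorem four_sub_le_sum_of_superior {r vss vsi vis vii u : ℝ} (hu : 0 ≤ u)
    (hmin : max (1 - min vss vsi) 0 ≤ r / 4)
    (hsup : 1 - vii - max (1 - vsi) 0 ≤ 1 - vss - max (1 - vis) 0) :
    4 - r ≤ vss + vsi + vis + vii + u := by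
  have hr : 0 ≤ r / 4 := (le_max_right _ _).trans hmin
  have hss : 1 - vss ≤ r / 4 := by
    linarith [min_le_left vss vsi, (le_max_left (1 - min vss vsi) 0).trans hmin]
  have hsi : 1 - vsi ≤ r / 4 := by
    linarith [min_le_right vss vsi, (le_max_left (1 - min vss vsi) 0).trans hmin]
  have his : 1 - vis ≤ max (1 - vis) 0 := le_max_left _ _
  have hpair : vss + 1 - r / 4 ≤ vis + vii := by linarith [max_le hsi hr]
  linarith

/-- Computation of d_{s,js}(r₁) (equation (108)): the infimum of
v_ss+v_si+v_is+v_ii+u over the outage region O_{s,js}^{1,2+} of equation (106)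
intersected with the superiority condition (82). -/
theorem d_s_js_inf (r₁ : ℝ) (hr0 : 0 < r₁) (hr2 : r₁ ≤ 2) :
    sInf {s : ℝ | ∃ vss vsi vis vii u : ℝ,
        0 ≤ vss ∧ 0 ≤ vsi ∧ 0 ≤ vis ∧ 0 ≤ vii ∧ 0 ≤ u ∧
        max (1 - min vss vsi) 0 ≤ r₁ / 4 ∧
        1 - vss - max (1 - vis) 0 ≥
          max (1 - vsi - max (1 - vii) 0)
            (max (1 - vis - max (1 - vss) 0) (1 - vii - max (1 - vsi) 0)) ∧
        s = vss + vsi + vis + vii + u} =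
      4 - r₁ := by
  refine IsLeast.csInf_eq ⟨?_, ?_⟩
  · have hv : 0 ≤ 1 - r₁ / 4 := by linarith
    refine ⟨1 - r₁ / 4, 1 - r₁ / 4, 1 - r₁ / 4, 1 - r₁ / 4, 0, hv, hv, hv, hv, le_rfl, ?_,
      by simp only [max_self, ge_iff_le, le_refl], by ring⟩
    rw [min_self, sub_sub_cancel, max_eq_left (by positivity)]
  · rintro s ⟨vss, vsi, vis, vii, u, -, -, -, -, hu, hmin, hsup, rfl⟩
    exact four_sub_le_sum_of_superior hu hmin
      (((le_max_right _ _).trans (le_max_right _ _)).trans hsup)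
end
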